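/- Writing c = c_r + i·c_i with c_r = Re c and c_i = Im c, the following real-part integral identity holds: ∫_{r_i}^{r_o} [ (r/(N² + r²))·|(r G(r))'|² + (k²/r)·|r G(r)|² − (Q'(r)·(U(r) − c_r)/|U(r) − c|²)·|r G(r)|² ] dr = 0, where (r G(r))' = G(r) + r G'(r). -/

import Mathlib

/-!
Write `F = r G` and `a(r) = r / (N² + r²)`, so that the equation reads
`(a F')' = k² G - Q' / (U - c) · F`. Multiplying by `conj F` and integrating by parts, the
boundary term `a F' conj F` vanishes because `F` does at both ends, leaving
`∫ (a F')' conj F + a |F'|² = 0`. Taking real parts, with `k² G conj F = (k² / r) |F|²` and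
`Re (Q' / (U - c)) = Q' (U - c_r) / |U - c|²`, gives the identity.
-/

open Real MeasureTheory Set Filter Topology ComplexConjugate

theorem ContDiffOn.hasDerivAt_derivWithin_Icc {E : Type*} [NormedAddCommGroup E]
    [NormedSpace ℝ E] {n : WithTop ℕ∞} {f : ℝ → E} {a b x : ℝ}
    (hf : ContDiffOn ℝ n f (Icc a b)) (hn : n ≠ 0) (hx : x ∈ Ioo a b) :
    HasDerivAt f (derivWithin f (Icc a b) x) x :=
  ((hf.differentiableOn hn) x (Ioo_subset_Icc_self hx)).hasDerivWithinAt.hasDerivAt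
    (Icc_mem_nhds hx.1 hx.2)

theorem integral_re_deriv_mul_deriv_mul_conj_add_eq_zero {lo hi : ℝ} (hlohi : lo < hi)
    {a : ℝ → ℝ} {F : ℝ → ℂ} (ha : ContDiffOn ℝ 1 a (Icc lo hi))
    (hF : ContDiffOn ℝ 2 F (Icc lo hi)) (hlo : F lo = 0) (hhi : F hi = 0) :
    ∫ r in lo..hi, ((deriv (fun s => (a s : ℂ) * deriv F s) r * conj (F r)).re
      + a r * ‖deriv F r‖ ^ 2) = 0 := by
  have hI : UniqueDiffOn ℝ (Icc lo hi) := uniqueDiffOn_Icc hlohi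
  -- `deriv` is junk at the endpoints; `derivWithin` agrees with it inside and is continuous
  -- up to them
  set F' := derivWithin F (Icc lo hi)
  have hF' : ContDiffOn ℝ 1 F' (Icc lo hi) := hF.derivWithin hI (by norm_num)
  set B : ℝ → ℂ := fun s => (a s : ℂ) * F' s
  have hB : ContDiffOn ℝ 1 B (Icc lo hi) :=
    (Complex.ofRealCLM.contDiff.comp_contDiffOn ha).mul hF'
  set B' := derivWithin B (Icc lo hi)
  have hderiv_F : ∀ r ∈ Ioo lo hi, deriv F r = F' r := fun r hr =>
    (hF.hasDerivAt_derivWithin_Icc two_ne_zero hr).deriv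
  have hderiv_B : ∀ r ∈ Ioo lo hi, deriv (fun s => (a s : ℂ) * deriv F s) r = B' r := by
    intro r hr
    have hBr : (fun s => (a s : ℂ) * deriv F s) =ᶠ[𝓝 r] B := by
      filter_upwards [Ioo_mem_nhds hr.1 hr.2] with s hs
      rw [hderiv_F s hs]
    rw [hBr.deriv_eq, (hB.hasDerivAt_derivWithin_Icc one_ne_zero hr).deriv]
  have hcont :
      ContinuousOn (fun r => (B' r * conj (F r)).re + a r * ‖F' r‖ ^ 2) (Icc lo hi) := by
    have hB' : ContinuousOn B' (Icc lo hi) := hB.continuousOn_derivWithin hI le_rfl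
    exact (Complex.continuous_re.comp_continuousOn (hB'.mul hF.continuousOn.star)).add
      (ha.continuousOn.mul (hF'.continuousOn.norm.pow 2))
  have hderiv_H : ∀ r ∈ Ioo lo hi, HasDerivAt (fun r => (B r * conj (F r)).re)
      ((B' r * conj (F r)).re + a r * ‖F' r‖ ^ 2) r := by
    intro r hr
    have hBF := (hB.hasDerivAt_derivWithin_Icc one_ne_zero hr).mul
      (hF.hasDerivAt_derivWithin_Icc two_ne_zero hr).star
    refine (Complex.reCLM.hasFDerivAt.comp_hasDerivAt r hBF).congr_deriv ?_
    change (B' r * conj (F r) + (a r : ℂ) * F' r * conj (F' r)).re = _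
    rw [mul_assoc, Complex.mul_conj, Complex.add_re, ← Complex.ofReal_mul, Complex.ofReal_re,
      Complex.sq_norm]
  calc _ = ∫ r in lo..hi, (B' r * conj (F r)).re + a r * ‖F' r‖ ^ 2 :=
        intervalIntegral.integral_congr_Ioo_of_le hlohi.le fun r hr => by
          simp only [hderiv_B r hr, hderiv_F r hr]
    _ = (B hi * conj (F hi)).re - (B lo * conj (F lo)).re :=
        intervalIntegral.integral_eq_sub_of_hasDerivAt_of_le hlohi.le
          (Complex.continuous_re.comp_continuousOn (hB.continuousOn.mul hF.continuousOn.star))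
          hderiv_H (hcont.intervalIntegrable_of_Icc hlohi.le)
    _ = 0 := by simp [hlo, hhi]

theorem re_sub_div_mul_conj (x k q u : ℝ) (c g : ℂ) (hx : x ≠ 0) :
    (((k : ℂ) ^ 2 * g - (q : ℂ) / ((u : ℂ) - c) * ((x : ℂ) * g)) * conj ((x : ℂ) * g)).re
      = k ^ 2 / x * ‖(x : ℂ) * g‖ ^ 2
        - q * (u - c.re) / ‖(u : ℂ) - c‖ ^ 2 * ‖(x : ℂ) * g‖ ^ 2 := by
  have hkg : (k : ℂ) ^ 2 * g = ((k ^ 2 / x : ℝ) : ℂ) * ((x : ℂ) * g) := by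
    have : (x : ℂ) ≠ 0 := Complex.ofReal_ne_zero.mpr hx
    push_cast
    field_simp
  rw [hkg, ← sub_mul, mul_assoc, Complex.mul_conj, Complex.re_mul_ofReal, Complex.sub_re,
    Complex.ofReal_re, Complex.div_re, ← Complex.sq_norm, ← Complex.sq_norm]
  simp only [Complex.ofReal_re, Complex.ofReal_im, Complex.sub_re, Complex.sub_im]
  ring

theorem stmt_4_general
    (ri ro : ℝ) (hri : 0 < ri) (hio : ri < ro)
    (N k : ℝ)
    (c : ℂ)
    (U Q : ℝ → ℝ)
    (G : ℝ → ℂ)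
    (hG : ContDiffOn ℝ 2 G (Set.Icc ri ro))
    (hGi : G ri = 0) (hGo : G ro = 0)
    (heq : ∀ r ∈ Set.Icc ri ro,
      deriv (fun s : ℝ => ((s / (N ^ 2 + s ^ 2) : ℝ) : ℂ) *
          deriv (fun t : ℝ => (t : ℂ) * G t) s) r
        - (k : ℂ) ^ 2 * G r
        + ((deriv Q r : ℝ) : ℂ) / ((U r : ℂ) - c) * ((r : ℂ) * G r) = 0) :
    ∫ r in ri..ro,
      (r / (N ^ 2 + r ^ 2)) * ‖deriv (fun t : ℝ => (t : ℂ) * G t) r‖ ^ 2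
        + (k ^ 2 / r) * ‖(r : ℂ) * G r‖ ^ 2
        - (deriv Q r * (U r - c.re) / ‖(U r : ℂ) - c‖ ^ 2)
            * ‖(r : ℂ) * G r‖ ^ 2 = 0 := by
  have hpos : ∀ r ∈ Icc ri ro, 0 < r := fun r hr => hri.trans_le hr.1
  have ha : ContDiffOn ℝ 1 (fun s : ℝ => s / (N ^ 2 + s ^ 2)) (Icc ri ro) :=
    contDiffOn_id.div (by fun_prop) fun s hs => by
      have := hpos s hs
      positivity
  have hF : ContDiffOn ℝ 2 (fun t : ℝ => (t : ℂ) * G t) (Icc ri ro) :=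
    Complex.ofRealCLM.contDiff.contDiffOn.mul hG
  rw [← integral_re_deriv_mul_deriv_mul_conj_add_eq_zero hio ha hF (by simp [hGi])
    (by simp [hGo])]
  refine intervalIntegral.integral_congr fun r hr => ?_
  rw [uIcc_of_le hio.le] at hr
  have hrayleigh : deriv (fun s : ℝ => ((s / (N ^ 2 + s ^ 2) : ℝ) : ℂ) *
      deriv (fun t : ℝ => (t : ℂ) * G t) s) r =
      (k : ℂ) ^ 2 * G r - ((deriv Q r : ℝ) : ℂ) / ((U r : ℂ) - c) * ((r : ℂ) * G r) := by
    linear_combination heq r hr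
  rw [hrayleigh, re_sub_div_mul_conj _ _ _ _ _ _ (hpos r hr).ne']
  ring

/-- Real-part integral identity obtained by multiplying the Rayleigh-type
equation by the complex conjugate of `r G` and integrating over the annulus. -/
theorem stmt_4
    (ri ro : ℝ) (hri : 0 < ri) (hio : ri < ro)
    (N k : ℝ) (hN : 0 ≤ N) (hk : 0 < k)
    (c : ℂ) (hc : c.im ≠ 0)
    (U Q : ℝ → ℝ)
    (hU : ContDiffOn ℝ 2 U (Set.Icc ri ro))
    (hQ : ∀ r, Q r = -(r * deriv U r) / (N ^ 2 + r ^ 2))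
    (G : ℝ → ℂ)
    (hG : ContDiffOn ℝ 2 G (Set.Icc ri ro))
    (hGi : G ri = 0) (hGo : G ro = 0)
    (heq : ∀ r ∈ Set.Icc ri ro,
      deriv (fun s : ℝ => ((s / (N ^ 2 + s ^ 2) : ℝ) : ℂ) *
          deriv (fun t : ℝ => (t : ℂ) * G t) s) r
        - (k : ℂ) ^ 2 * G r
        + ((deriv Q r : ℝ) : ℂ) / ((U r : ℂ) - c) * ((r : ℂ) * G r) = 0) :
    ∫ r in ri..ro,
      (r / (N ^ 2 + r ^ 2)) * ‖deriv (fun t : ℝ => (t : ℂ) * G t) r‖ ^ 2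
        + (k ^ 2 / r) * ‖(r : ℂ) * G r‖ ^ 2
        - (deriv Q r * (U r - c.re) / ‖(U r : ℂ) - c‖ ^ 2)
            * ‖(r : ℂ) * G r‖ ^ 2 = 0 :=
  stmt_4_general ri ro hri hio N k c U Q G hG hGi hGo heq
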